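/- arXiv:1312.3581 — 3 statements merged into one kernel-verified Lean document; each statement's English description precedes it below -/
import Mathlib

section
/- In any Lie ring, for all elements x, y one has 0 = ⁅⁅x,⁅x,y⁆⁆, ⁅y,⁅x,y⁆⁆⁆ − ⁅⁅x,y⁆, ⁅x,⁅y,⁅x,y⁆⁆⁆⁆ − ⁅y,⁅y,⁅x,⁅x,⁅x,y⁆⁆⁆⁆⁆ + ⁅y,⁅x,⁅x,⁅y,⁅x,y⁆⁆⁆⁆⁆. -/
theorem lie_lie_lie_self_comm {L : Type*} [LieRing L] (x y : L) :
    ⁅x, ⁅y, ⁅x, y⁆⁆⁆ = ⁅y, ⁅x, ⁅x, y⁆⁆⁆ := by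
  rw [leibniz_lie, lie_self, zero_add]

/- With `a = ⁅x, y⁆`, `b = ⁅x, a⁆`, `c = ⁅y, a⁆` and `⁅x, c⁆ = ⁅y, b⁆`, the last two terms combine
to `⁅y, ⁅a, b⁆⁆ = ⁅c, b⁆ + ⁅a, ⁅y, b⁆⁆`, which cancels the first two. -/
/-- In any Lie ring, for all elements `x, y` one has
`0 = ⁅⁅x,⁅x,y⁆⁆, ⁅y,⁅x,y⁆⁆⁆ − ⁅⁅x,y⁆, ⁅x,⁅y,⁅x,y⁆⁆⁆⁆ − ⁅y,⁅y,⁅x,⁅x,⁅x,y⁆⁆⁆⁆⁆ +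
⁅y,⁅x,⁅x,⁅y,⁅x,y⁆⁆⁆⁆⁆`, a consequence of the Jacobi identity, valid in particular
in any free Lie algebra. -/
theorem free_lie_identity_one {L : Type*} [LieRing L] (x y : L) :
    0 = ⁅⁅x, ⁅x, y⁆⁆, ⁅y, ⁅x, y⁆⁆⁆ - ⁅⁅x, y⁆, ⁅x, ⁅y, ⁅x, y⁆⁆⁆⁆
        - ⁅y, ⁅y, ⁅x, ⁅x, ⁅x, y⁆⁆⁆⁆⁆ + ⁅y, ⁅x, ⁅x, ⁅y, ⁅x, y⁆⁆⁆⁆⁆ := by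
  have hleibniz : ⁅y, ⁅x, ⁅y, ⁅x, ⁅x, y⁆⁆⁆⁆⁆ - ⁅y, ⁅y, ⁅x, ⁅x, ⁅x, y⁆⁆⁆⁆⁆
      = ⁅⁅y, ⁅x, y⁆⁆, ⁅x, ⁅x, y⁆⁆⁆ + ⁅⁅x, y⁆, ⁅y, ⁅x, ⁅x, y⁆⁆⁆⁆ := by
    rw [← lie_sub, ← lie_lie, leibniz_lie]
  rw [lie_lie_lie_self_comm, ← lie_skew ⁅x, ⁅x, y⁆⁆ ⁅y, ⁅x, y⁆⁆]
  linear_combination (norm := module) -hleibniz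
end

section
/- In any Lie ring, for all elements x, y one has 0 = ⁅⁅x,⁅x,y⁆⁆, ⁅y,⁅x,y⁆⁆⁆ + ⁅⁅x,y⁆, ⁅x,⁅y,⁅x,y⁆⁆⁆⁆ + ⁅x,⁅y,⁅x,⁅y,⁅x,y⁆⁆⁆⁆⁆ − ⁅x,⁅x,⁅y,⁅y,⁅x,y⁆⁆⁆⁆⁆. -/
/-- In any Lie ring, for all elements `x, y` one has
`0 = ⁅⁅x,⁅x,y⁆⁆, ⁅y,⁅x,y⁆⁆⁆ + ⁅⁅x,y⁆, ⁅x,⁅y,⁅x,y⁆⁆⁆⁆ + ⁅x,⁅y,⁅x,⁅y,⁅x,y⁆⁆⁆⁆⁆ −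
⁅x,⁅x,⁅y,⁅y,⁅x,y⁆⁆⁆⁆⁆`, a consequence of the Jacobi identity, valid in particular
in any free Lie algebra. -/
theorem free_lie_identity_two {L : Type*} [LieRing L] (x y : L) :
    0 = ⁅⁅x, ⁅x, y⁆⁆, ⁅y, ⁅x, y⁆⁆⁆ + ⁅⁅x, y⁆, ⁅x, ⁅y, ⁅x, y⁆⁆⁆⁆
        + ⁅x, ⁅y, ⁅x, ⁅y, ⁅x, y⁆⁆⁆⁆⁆ - ⁅x, ⁅x, ⁅y, ⁅y, ⁅x, y⁆⁆⁆⁆⁆ := by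
  -- The Leibniz form of Jacobi, `⁅⁅a, b⁆, c⁆ = ⁅a, ⁅b, c⁆⁆ - ⁅b, ⁅a, c⁆⁆`, rewrites every term
  -- into right-normed words in `x` and `y`, which then cancel formally.
  simp only [lie_lie, lie_sub]
  abel
end

section
/- Let φ : ℝ³ → ℝ be C². Then for every C² function f : ℝ³ → ℂ one has i·(L(L̄ f) − L̄(L f)) = ℓ · f_u, where ℓ : ℝ³ → ℂ is the function ℓ = [ 2 φ_{z z̄} (1 + φ_u²) − 2 i φ_{z̄} φ_{z u} − 2 φ_{z̄} φ_{z u} φ_u + 2 i φ_z φ_{z̄ u} + 2 φ_z φ_{z̄} φ_{u u} − 2 φ_z φ_{z̄ u} φ_u ] / (1 + φ_u²)², and moreover ℓ is real-valued (ℓ = conj ℓ). Here φ_{z u} := (φ_z)_u, φ_{z̄ u} := (φ_{z̄})_u, φ_{z z̄} := (φ_z)_{z̄}. -/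
noncomputable section
open Complex ComplexConjugate

/-- Points of `ℝ³`, with coordinates `(x, y, u)` and `z = x + i y`. -/
abbrev V3 := Fin 3 → ℝ

/-- Partial derivative in the `j`-th coordinate direction. -/
def pd (j : Fin 3) (f : V3 → ℂ) : V3 → ℂ := fun p => fderiv ℝ f p (Pi.single j 1)

/-- Wirtinger derivative `f_z := (f_x − i f_y)/2`. -/
def wz (f : V3 → ℂ) : V3 → ℂ := fun p => (pd 0 f p - I * pd 1 f p) / 2

/-- Wirtinger derivative `f_z̄ := (f_x + i f_y)/2`. -/
def wzb (f : V3 → ℂ) : V3 → ℂ := fun p => (pd 0 f p + I * pd 1 f p) / 2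

/-- Partial derivative `f_u`. -/
def du (f : V3 → ℂ) : V3 → ℂ := pd 2 f

/-- Complexification of a real-valued function. -/
def cl (φ : V3 → ℝ) : V3 → ℂ := fun p => (φ p : ℂ)

/-- The coefficient `A := −φ_z/(i + φ_u)`. -/
def Afun (φ : V3 → ℝ) : V3 → ℂ := fun p => -(wz (cl φ) p) / (I + du (cl φ) p)

/-- The operator `L f := f_z + A·f_u`. -/
def Lop (φ : V3 → ℝ) (f : V3 → ℂ) : V3 → ℂ := fun p => wz f p + Afun φ p * du f p

/-- The conjugate operator `L̄ f := f_z̄ + Ā·f_u`. -/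
def Lbop (φ : V3 → ℝ) (f : V3 → ℂ) : V3 → ℂ :=
  fun p => wzb f p + conj (Afun φ p) * du f p

/-- The coefficient-function `ℓ` of `T = i[L, L̄]`. -/
def ell (φ : V3 → ℝ) : V3 → ℂ := fun p =>
  (2 * wzb (wz (cl φ)) p * (1 + du (cl φ) p ^ 2)
      - 2 * I * wzb (cl φ) p * du (wz (cl φ)) p
      - 2 * wzb (cl φ) p * du (wz (cl φ)) p * du (cl φ) p
      + 2 * I * wz (cl φ) p * du (wzb (cl φ)) p
      + 2 * wz (cl φ) p * wzb (cl φ) p * du (du (cl φ)) p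
      - 2 * wz (cl φ) p * du (wzb (cl φ)) p * du (cl φ) p)
    / (1 + du (cl φ) p ^ 2) ^ 2

/-!
The bracket of two complex vector fields is again a vector field, whose coefficients are obtained by
letting each field act on the coefficients of the other; the second-order terms cancel by the
symmetry of second derivatives. The `∂_x`- and `∂_y`-coefficients of `L` and `L̄` are constant, so
`[L, L̄] = (L Ā − L̄ A) ∂_u`. Complex conjugation exchanges `L` and `L̄`, hence `L Ā = conj (L̄ A)`
and `i [L, L̄] = i (conj w − w) ∂_u` with `w = L̄ A`. The coefficient `i (conj w − w) = 2 Im w` is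
real, and the quotient rule for `A = −φ_z / (i + φ_u)` turns it into the formula for `ℓ`.
-/

section PartialDerivatives

variable {f g : V3 → ℂ} {p : V3} {j : Fin 3}

theorem differentiable_pd (hf : ContDiff ℝ 2 f) (j : Fin 3) : Differentiable ℝ (pd j f) :=
  ((hf.fderiv_right (m := 1) (by norm_num)).clm_apply contDiff_const).differentiable one_ne_zero

theorem pd_const (c : ℂ) : pd j (fun _ => c) p = 0 := by
  simp [pd]

theorem pd_neg : pd j (fun q => -f q) p = -pd j f p := by
  simp [pd, fderiv_fun_neg]

theorem pd_const_add (c : ℂ) : pd j (fun q => c + f q) p = pd j f p := by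
  simp [pd, fderiv_const_add]

theorem pd_mul (hf : DifferentiableAt ℝ f p) (hg : DifferentiableAt ℝ g p) :
    pd j (fun q => f q * g q) p = pd j f p * g p + f p * pd j g p := by
  simp only [pd, fderiv_fun_mul hf hg, add_apply, smul_apply, smul_eq_mul]
  ring

theorem pd_div (hf : DifferentiableAt ℝ f p) (hg : DifferentiableAt ℝ g p) (hg0 : g p ≠ 0) :
    pd j (fun q => f q / g q) p = (pd j f p * g p - f p * pd j g p) / g p ^ 2 := by
  have hinv : pd j (fun q => (g q)⁻¹) p = -pd j g p / g p ^ 2 := by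
    have H : HasFDerivAt (fun q => (g q)⁻¹) _ p := (hasFDerivAt_inv' hg0).comp p hg.hasFDerivAt
    unfold pd
    rw [H.fderiv, ContinuousLinearMap.neg_comp, neg_apply, ContinuousLinearMap.comp_apply,
      ContinuousLinearMap.mulLeftRight_apply]
    field_simp
  simp only [div_eq_mul_inv]
  rw [pd_mul (g := fun q => (g q)⁻¹) hf (hg.inv hg0), hinv]
  field_simp
  ring

theorem pd_sum {ι : Type*} (s : Finset ι) {F : ι → V3 → ℂ}
    (hF : ∀ i ∈ s, DifferentiableAt ℝ (F i) p) :
    pd j (fun q => ∑ i ∈ s, F i q) p = ∑ i ∈ s, pd j (F i) p := by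
  simp [pd, fderiv_fun_sum hF]

theorem pd_conj (hf : DifferentiableAt ℝ f p) :
    pd j (fun q => conj (f q)) p = conj (pd j f p) := by
  have H : HasFDerivAt (fun q => conj (f q)) _ p :=
    (conjCLE : ℂ →L[ℝ] ℂ).hasFDerivAt.comp p hf.hasFDerivAt
  unfold pd
  rw [H.fderiv]
  simp

theorem pd_comm (hf : ContDiff ℝ 2 f) (i j : Fin 3) (p : V3) :
    pd i (pd j f) p = pd j (pd i f) p := by
  have hd : DifferentiableAt ℝ (fderiv ℝ f) p :=
    (hf.fderiv_right (m := 1) (by norm_num)).differentiable one_ne_zero p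
  have hsymm := (hf.contDiffAt (x := p)).isSymmSndFDerivAt (by norm_num)
  show fderiv ℝ (fun q => fderiv ℝ f q (Pi.single j 1)) p (Pi.single i 1)
     = fderiv ℝ (fun q => fderiv ℝ f q (Pi.single i 1)) p (Pi.single j 1)
  rw [fderiv_clm_apply hd (differentiableAt_const _), fderiv_clm_apply hd (differentiableAt_const _)]
  simp [hsymm (Pi.single i 1) (Pi.single j 1)]

end PartialDerivatives

def vfDeriv (a : Fin 3 → V3 → ℂ) (f : V3 → ℂ) : V3 → ℂ := fun p => ∑ k, a k p * pd k f p

section VectorFields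

variable {a b : Fin 3 → V3 → ℂ} {f : V3 → ℂ} {p : V3}

theorem pd_vfDeriv (hb : ∀ k, DifferentiableAt ℝ (b k) p) (hf : ContDiff ℝ 2 f) (j : Fin 3) :
    pd j (vfDeriv b f) p = ∑ k, (pd j (b k) p * pd k f p + b k p * pd j (pd k f) p) := by
  unfold vfDeriv
  rw [pd_sum (F := fun k q => b k q * pd k f q) _ fun k _ => (hb k).mul (differentiable_pd hf k p)]
  exact Finset.sum_congr rfl fun k _ => pd_mul (hb k) (differentiable_pd hf k p)

theorem vfDeriv_vfDeriv (hb : ∀ k, DifferentiableAt ℝ (b k) p) (hf : ContDiff ℝ 2 f) :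
    vfDeriv a (vfDeriv b f) p =
      ∑ k, vfDeriv a (b k) p * pd k f p + ∑ j, ∑ k, a j p * b k p * pd j (pd k f) p := by
  simp only [vfDeriv, pd_vfDeriv hb hf, Finset.mul_sum, Finset.sum_mul, mul_add,
    Finset.sum_add_distrib]
  rw [Finset.sum_comm (f := fun j k => a j p * (pd j (b k) p * pd k f p))]
  simp only [mul_assoc]

theorem vfDeriv_bracket (ha : ∀ k, DifferentiableAt ℝ (a k) p)
    (hb : ∀ k, DifferentiableAt ℝ (b k) p) (hf : ContDiff ℝ 2 f) :
    vfDeriv a (vfDeriv b f) p - vfDeriv b (vfDeriv a f) p =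
      ∑ k, (vfDeriv a (b k) p - vfDeriv b (a k) p) * pd k f p := by
  have hsymm : ∑ j, ∑ k, a j p * b k p * pd j (pd k f) p =
      ∑ j, ∑ k, b j p * a k p * pd j (pd k f) p := by
    rw [Finset.sum_comm]
    refine Finset.sum_congr rfl fun j _ => Finset.sum_congr rfl fun k _ => ?_
    rw [pd_comm hf]
    ring
  rw [vfDeriv_vfDeriv hb hf, vfDeriv_vfDeriv ha hf, hsymm]
  simp only [sub_mul, Finset.sum_sub_distrib]
  ring

theorem vfDeriv_const_comm (c d : Fin 3 → ℂ) (hf : ContDiff ℝ 2 f) :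
    vfDeriv (fun k _ => c k) (vfDeriv (fun k _ => d k) f) p =
      vfDeriv (fun k _ => d k) (vfDeriv (fun k _ => c k) f) p := by
  rw [← sub_eq_zero, vfDeriv_bracket (fun _ => differentiableAt_const _)
    (fun _ => differentiableAt_const _) hf]
  simp [vfDeriv, pd_const]

end VectorFields

section Wirtinger

variable {f : V3 → ℂ} {p : V3}

theorem wz_eq_vfDeriv : wz = vfDeriv (fun k _ => ![2⁻¹, -I / 2, 0] k) := by
  funext f p
  simp only [wz, vfDeriv, Fin.sum_univ_three, Matrix.cons_val_zero, Matrix.cons_val_one, Matrix.cons_val_two,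
    Matrix.tail_cons, Matrix.head_cons]
  ring

theorem wzb_eq_vfDeriv : wzb = vfDeriv (fun k _ => ![2⁻¹, I / 2, 0] k) := by
  funext f p
  simp only [wzb, vfDeriv, Fin.sum_univ_three, Matrix.cons_val_zero, Matrix.cons_val_one, Matrix.cons_val_two,
    Matrix.tail_cons, Matrix.head_cons]
  ring

theorem du_eq_vfDeriv : du = vfDeriv (fun k _ => ![0, 0, 1] k) := by
  funext f p
  simp [du, vfDeriv, Fin.sum_univ_three]

theorem wz_wzb_comm (hf : ContDiff ℝ 2 f) : wz (wzb f) p = wzb (wz f) p := by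
  rw [wz_eq_vfDeriv, wzb_eq_vfDeriv]
  exact vfDeriv_const_comm _ _ hf

theorem wzb_du_comm (hf : ContDiff ℝ 2 f) : wzb (du f) p = du (wzb f) p := by
  rw [wzb_eq_vfDeriv, du_eq_vfDeriv]
  exact vfDeriv_const_comm _ _ hf

theorem differentiable_wz (hf : ContDiff ℝ 2 f) : Differentiable ℝ (wz f) := by
  have := differentiable_pd hf 0
  have := differentiable_pd hf 1
  unfold wz
  fun_prop

theorem differentiable_du (hf : ContDiff ℝ 2 f) : Differentiable ℝ (du f) :=
  differentiable_pd hf 2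

theorem wz_conj (hf : DifferentiableAt ℝ f p) : wz (fun q => conj (f q)) p = conj (wzb f p) := by
  simp only [wz, wzb, pd_conj hf, map_div₀, map_add, map_mul, conj_I, map_ofNat]
  ring

theorem wzb_conj (hf : DifferentiableAt ℝ f p) : wzb (fun q => conj (f q)) p = conj (wz f p) := by
  simp only [wz, wzb, pd_conj hf, map_div₀, map_sub, map_mul, conj_I, map_ofNat]
  ring

theorem du_conj (hf : DifferentiableAt ℝ f p) : du (fun q => conj (f q)) p = conj (du f p) :=
  pd_conj hf

end Wirtinger

section Operators

variable {φ : V3 → ℝ} {f g : V3 → ℂ} {p : V3}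

theorem Lop_eq_vfDeriv (φ : V3 → ℝ) : Lop φ = vfDeriv ![fun _ => 2⁻¹, fun _ => -I / 2, Afun φ] := by
  funext f p
  simp only [Lop, wz, du, vfDeriv, Fin.sum_univ_three, Matrix.cons_val_zero, Matrix.cons_val_one, Matrix.cons_val_two,
    Matrix.tail_cons, Matrix.head_cons]
  ring

theorem Lbop_eq_vfDeriv (φ : V3 → ℝ) :
    Lbop φ = vfDeriv ![fun _ => 2⁻¹, fun _ => I / 2, fun q => conj (Afun φ q)] := by
  funext f p
  simp only [Lbop, wzb, du, vfDeriv, Fin.sum_univ_three, Matrix.cons_val_zero, Matrix.cons_val_one, Matrix.cons_val_two,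
    Matrix.tail_cons, Matrix.head_cons]
  ring

theorem Lop_conj (hg : DifferentiableAt ℝ g p) :
    Lop φ (fun q => conj (g q)) p = conj (Lbop φ g p) := by
  simp only [Lop, Lbop, wz_conj hg, du_conj hg, map_add, map_mul, conj_conj]

theorem contDiff_cl (hφ : ContDiff ℝ 2 φ) : ContDiff ℝ 2 (cl φ) :=
  ofRealCLM.contDiff.comp hφ

theorem conj_comp_cl (φ : V3 → ℝ) : (fun q => conj (cl φ q)) = cl φ :=
  funext fun q => conj_ofReal (φ q)

theorem conj_du_cl (hφ : ContDiff ℝ 2 φ) : conj (du (cl φ) p) = du (cl φ) p := by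
  rw [← du_conj ((contDiff_cl hφ).differentiable two_ne_zero p), conj_comp_cl]

theorem conj_wz_cl (hφ : ContDiff ℝ 2 φ) : conj (wz (cl φ) p) = wzb (cl φ) p := by
  rw [← wzb_conj ((contDiff_cl hφ).differentiable two_ne_zero p), conj_comp_cl]

theorem conj_du_wz_cl (hφ : ContDiff ℝ 2 φ) : conj (du (wz (cl φ)) p) = du (wzb (cl φ)) p := by
  rw [← du_conj (differentiable_wz (contDiff_cl hφ) p), funext fun q => conj_wz_cl hφ (p := q)]

theorem conj_wzb_wz_cl (hφ : ContDiff ℝ 2 φ) : conj (wzb (wz (cl φ)) p) = wzb (wz (cl φ)) p := by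
  rw [← wz_conj (differentiable_wz (contDiff_cl hφ) p), funext fun q => conj_wz_cl hφ (p := q),
    wz_wzb_comm (contDiff_cl hφ)]

theorem conj_du_du_cl (hφ : ContDiff ℝ 2 φ) : conj (du (du (cl φ)) p) = du (du (cl φ)) p := by
  rw [← du_conj (differentiable_du (contDiff_cl hφ) p), funext fun q => conj_du_cl hφ (p := q)]

theorem I_add_du_cl_ne_zero (hφ : ContDiff ℝ 2 φ) : I + du (cl φ) p ≠ 0 := by
  obtain ⟨r, hr⟩ := conj_eq_iff_real.1 (conj_du_cl hφ (p := p))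
  rw [hr]
  intro h
  simpa using congrArg im h

theorem differentiable_Afun (hφ : ContDiff ℝ 2 φ) : Differentiable ℝ (Afun φ) := by
  have := differentiable_wz (contDiff_cl hφ)
  have := differentiable_du (contDiff_cl hφ)
  intro p
  unfold Afun
  simp only [div_eq_mul_inv]
  fun_prop (disch := exact I_add_du_cl_ne_zero hφ)

theorem Lop_Lbop_bracket (hφ : ContDiff ℝ 2 φ) (hf : ContDiff ℝ 2 f) (p : V3) :
    Lop φ (Lbop φ f) p - Lbop φ (Lop φ f) p =
      (Lop φ (fun q => conj (Afun φ q)) p - Lbop φ (Afun φ) p) * du f p := by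
  have hA := differentiable_Afun hφ p
  rw [Lop_eq_vfDeriv, Lbop_eq_vfDeriv, vfDeriv_bracket _ _ hf]
  · simp [Fin.sum_univ_three, vfDeriv, pd_const, du]
  all_goals intro k; fin_cases k
  all_goals first | exact differentiableAt_const _ | exact hA | exact hA.star

end Operators

section Coefficient

variable {φ : V3 → ℝ} {p : V3}

theorem pd_Afun (hφ : ContDiff ℝ 2 φ) (j : Fin 3) :
    pd j (Afun φ) p =
      (-pd j (wz (cl φ)) p * (I + du (cl φ) p) + wz (cl φ) p * pd j (du (cl φ)) p) /
        (I + du (cl φ) p) ^ 2 := by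
  unfold Afun
  rw [pd_div (f := fun q => -wz (cl φ) q) (g := fun q => I + du (cl φ) q)
    (differentiable_wz (contDiff_cl hφ) p).neg
    ((differentiable_du (contDiff_cl hφ) p).const_add I) (I_add_du_cl_ne_zero hφ),
    pd_neg, pd_const_add]
  ring

theorem wzb_Afun (hφ : ContDiff ℝ 2 φ) :
    wzb (Afun φ) p =
      (-wzb (wz (cl φ)) p * (I + du (cl φ) p) + wz (cl φ) p * du (wzb (cl φ)) p) /
        (I + du (cl φ) p) ^ 2 := by
  rw [← wzb_du_comm (contDiff_cl hφ)]
  simp only [wzb, pd_Afun hφ]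
  ring

theorem du_Afun (hφ : ContDiff ℝ 2 φ) :
    du (Afun φ) p =
      (-du (wz (cl φ)) p * (I + du (cl φ) p) + wz (cl φ) p * du (du (cl φ)) p) /
        (I + du (cl φ) p) ^ 2 :=
  pd_Afun hφ 2

/-- `ℓ = i (conj w − w)` for `w = L̄ A`, in terms of `G = φ_z`, `Q = φ_{zu}` and the real quantities
`U = φ_u`, `P = φ_{zz̄}`, `R = φ_{uu}`. -/
theorem I_mul_conj_sub_self_eq {w G Q : ℂ} {U P R : ℝ}
    (hw : w = (-P * (I + U) + G * conj Q) / (I + U) ^ 2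
      + conj (-G / (I + U)) * ((-Q * (I + U) + G * R) / (I + U) ^ 2)) :
    I * (conj w - w) =
      (2 * P * (1 + U ^ 2) - 2 * I * conj G * Q - 2 * conj G * Q * U
        + 2 * I * G * conj Q + 2 * G * conj G * R - 2 * G * conj Q * U) / (1 + U ^ 2) ^ 2 := by
  have hd : (I + U : ℂ) ≠ 0 := by
    intro h; simpa using congrArg im h
  have hd' : (-I + U : ℂ) ≠ 0 := by
    intro h; simpa using congrArg im h
  have hn : (1 + (U : ℂ) ^ 2) = (I + U) * (-I + U) := by
    ring_nf; rw [I_sq]; ring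
  subst hw
  simp only [map_add, map_div₀, map_mul, map_neg, map_pow, conj_conj, conj_ofReal, conj_I]
  rw [hn]
  field_simp
  grind [I_sq]

theorem ell_eq (hφ : ContDiff ℝ 2 φ) (p : V3) :
    ell φ p = I * (conj (Lbop φ (Afun φ) p) - Lbop φ (Afun φ) p) := by
  obtain ⟨U, hU⟩ := conj_eq_iff_real.1 (conj_du_cl hφ (p := p))
  obtain ⟨P, hP⟩ := conj_eq_iff_real.1 (conj_wzb_wz_cl hφ (p := p))
  obtain ⟨R, hR⟩ := conj_eq_iff_real.1 (conj_du_du_cl hφ (p := p))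
  have hGb := (conj_wz_cl hφ (p := p)).symm
  have hQb := (conj_du_wz_cl hφ (p := p)).symm
  rw [I_mul_conj_sub_self_eq (G := wz (cl φ) p) (Q := du (wz (cl φ)) p) (U := U) (P := P) (R := R)]
  · simp only [ell, hGb, hQb, hU, hP, hR]
  · simp only [Lbop, wzb_Afun hφ, du_Afun hφ, Afun, hQb, hU, hP, hR]

end Coefficient

/-- For `φ : ℝ³ → ℝ` of class `C²`, one has `i·(L(L̄ f) − L̄(L f)) = ℓ · f_u` for every
`C²` function `f : ℝ³ → ℂ`, and moreover `ℓ` is real-valued. -/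
theorem class_I_bracket_LLbar (φ : V3 → ℝ) (hφ : ContDiff ℝ 2 φ) :
    (∀ f : V3 → ℂ, ContDiff ℝ 2 f → ∀ p,
        I * (Lop φ (Lbop φ f) p - Lbop φ (Lop φ f) p) = ell φ p * du f p) ∧
    (∀ p, ell φ p = conj (ell φ p)) := by
  refine ⟨fun f hf p => ?_, fun p => ?_⟩
  · rw [Lop_Lbop_bracket hφ hf p, Lop_conj (differentiable_Afun hφ p), ell_eq hφ p]
    ring
  · rw [ell_eq hφ p]
    simp only [map_mul, map_sub, conj_I, conj_conj]
    ring

end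
end
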